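/- arXiv:1711.03746 — 2 statements merged into one kernel-verified Lean document; each statement's English description precedes it below -/
import Mathlib

section
/- Let X be a proper metric space, ρ : C₀(X) → B(H) a nondegenerate representation, B ⊆ X a compact subset, and T ∈ B(H) a locally compact operator such that ρ(f)T = 0 and Tρ(f) = 0 for every f ∈ C₀(X) vanishing on B. Then T is a compact operator. -/
open scoped ZeroAtInfty
open ContinuousLinearMap

/-- A representation `ρ : C₀(X) → B(H)` is nondegenerate if the closed linear span of
`{ρ(f)v : f ∈ C₀(X), v ∈ H}` equals `H`. -/
def Nondegenerate {X H : Type*} [MetricSpace X]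
    [NormedAddCommGroup H] [InnerProductSpace ℂ H] [CompleteSpace H]
    (ρ : C₀(X, ℂ) →⋆ₙₐ[ℂ] (H →L[ℂ] H)) : Prop :=
  (Submodule.span ℂ {w : H | ∃ f : C₀(X, ℂ), ∃ v : H, w = ρ f v}).topologicalClosure = ⊤

/-- An operator `T ∈ B(H)` is locally compact with respect to `ρ` if `ρ(f)T` and `Tρ(f)` are
compact operators for every `f ∈ C₀(X)`. -/
def LocallyCompactOp {X H : Type*} [MetricSpace X]
    [NormedAddCommGroup H] [InnerProductSpace ℂ H] [CompleteSpace H]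
    (ρ : C₀(X, ℂ) →⋆ₙₐ[ℂ] (H →L[ℂ] H)) (T : H →L[ℂ] H) : Prop :=
  ∀ f : C₀(X, ℂ), IsCompactOperator ⇑(ρ f ∘L T) ∧ IsCompactOperator ⇑(T ∘L ρ f)

/-!
Since `X` is locally compact there is `φ ∈ C₀(X)` with `φ = 1` on `B`. For every `g`, the function
`g - gφ` vanishes on `B`, so `ρ(g)(T - ρ(φ)T) = 0`. By nondegeneracy a vector killed by every
`ρ(g)` is orthogonal to every `ρ(g*)w`, hence zero; thus `T = ρ(φ)T`, which is compact because
`T` is locally compact.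
-/

theorem exists_zeroAtInfty_eqOn_one {X 𝕜 : Type*} [TopologicalSpace X] [RegularSpace X]
    [LocallyCompactSpace X] [RCLike 𝕜] {B : Set X} (hB : IsCompact B) :
    ∃ φ : C₀(X, 𝕜), Set.EqOn φ 1 B := by
  obtain ⟨φ, hφ, -, hφc, -⟩ :=
    exists_continuous_one_zero_of_isCompact hB isClosed_empty (Set.disjoint_empty B)
  refine ⟨⟨⟨fun x => (φ x : 𝕜), by fun_prop⟩,
    (hφc.comp_left (g := ((↑) : ℝ → 𝕜)) RCLike.ofReal_zero).is_zero_at_infty⟩, fun x hx => ?_⟩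
  simp [hφ hx]

namespace Nondegenerate

variable {X H : Type*} [MetricSpace X] [NormedAddCommGroup H] [InnerProductSpace ℂ H]
  [CompleteSpace H] {ρ : C₀(X, ℂ) →⋆ₙₐ[ℂ] (H →L[ℂ] H)}

theorem eq_zero_of_forall_apply_eq_zero (hρ : Nondegenerate ρ) {v : H}
    (hv : ∀ f, ρ f v = 0) : v = 0 := by
  have hspan : Submodule.span ℂ {w : H | ∃ f : C₀(X, ℂ), ∃ u : H, w = ρ f u} ≤ (ℂ ∙ v)ᗮ := by
    rw [Submodule.span_le]
    rintro _ ⟨f, u, rfl⟩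
    rw [SetLike.mem_coe, Submodule.mem_orthogonal_singleton_iff_inner_left,
      ← adjoint_inner_right, ← star_eq_adjoint, ← map_star, hv, inner_zero_right]
  have hle := Submodule.topologicalClosure_minimal _ hspan (Submodule.isClosed_orthogonal _)
  rw [hρ] at hle
  exact inner_self_eq_zero.mp
    (Submodule.mem_orthogonal_singleton_iff_inner_right.mp (hle Submodule.mem_top))

theorem ext_of_forall_comp_eq (hρ : Nondegenerate ρ) {S T : H →L[ℂ] H}
    (h : ∀ f, ρ f ∘L S = ρ f ∘L T) : S = T :=
  ext fun v => sub_eq_zero.mp <| hρ.eq_zero_of_forall_apply_eq_zero fun f => by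
    simpa [sub_eq_zero] using congr($(h f) v)

theorem comp_eq_self_of_eqOn_one (hρ : Nondegenerate ρ) {B : Set X} {T : H →L[ℂ] H}
    (hT : ∀ f : C₀(X, ℂ), (∀ y ∈ B, f y = 0) → ρ f ∘L T = 0) {φ : C₀(X, ℂ)}
    (hφ : Set.EqOn φ 1 B) : ρ φ ∘L T = T := by
  refine hρ.ext_of_forall_comp_eq fun g => ?_
  have hvanish : ∀ y ∈ B, (g - g * φ) y = 0 := fun y hy => by simp [hφ hy]
  have := hT _ hvanish
  rw [map_sub, map_mul, mul_def, sub_comp, sub_eq_zero] at this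
  rw [← comp_assoc, ← this]

end Nondegenerate

/-- Let `X` be a proper metric space, `ρ : C₀(X) → B(H)` a nondegenerate
representation, `B ⊆ X` a compact subset, and `T ∈ B(H)` a locally compact operator such that
`ρ(f)T = 0` and `Tρ(f) = 0` for every `f ∈ C₀(X)` vanishing on `B`. Then `T` is a compact
operator. -/
theorem compactly_supported_locally_compact_is_compact
    (X : Type*) [MetricSpace X] [ProperSpace X]
    (H : Type*) [NormedAddCommGroup H] [InnerProductSpace ℂ H] [CompleteSpace H]
    (ρ : C₀(X, ℂ) →⋆ₙₐ[ℂ] (H →L[ℂ] H)) (hρ : Nondegenerate ρ)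
    (B : Set X) (hB : IsCompact B)
    (T : H →L[ℂ] H) (hT : LocallyCompactOp ρ T)
    (hsupp : ∀ f : C₀(X, ℂ), (∀ y ∈ B, f y = 0) → ρ f ∘L T = 0 ∧ T ∘L ρ f = 0) :
    IsCompactOperator ⇑T := by
  obtain ⟨φ, hφ⟩ := exists_zeroAtInfty_eqOn_one (𝕜 := ℂ) hB
  rw [← hρ.comp_eq_self_of_eqOn_one (fun f hf => (hsupp f hf).1) hφ]
  exact (hT φ).1
end

section
/- Let X be a metric space and U1, U2 ⊆ U ⊆ X subsets. If U1 and U2 coarsely cover U, then their closures Ū1 and Ū2 coarsely cover the closure Ū; that is, if for every R > 0 the set {x ∈ U : d(x, U∖U1) ≤ R and d(x, U∖U2) ≤ R} is bounded, then for every R > 0 the set {x ∈ Ū : d(x, Ū∖Ū1) ≤ R and d(x, Ū∖Ū2) ≤ R} is bounded. -/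
/-!
A point of `closure U` is within `1` of a point of `U`, and a point of `closure U \ closure V`
is within `1` of a point of `U \ V`, since `closure U \ closure V ⊆ closure (U \ V)`. Moving the
three points in the defining condition this way places the set for the closures at scale `R`
inside the `1`-thickening of the set for `U, U1, U2` at scale `R + 2`, which is bounded.
-/

/-- Subsets `U1, U2 ⊆ U` coarsely cover `U` if for every `R > 0` the set
`{x ∈ U : d(x, U∖U1) ≤ R and d(x, U∖U2) ≤ R}` is metrically bounded. -/
def CoarselyCovers {X : Type*} [MetricSpace X] (U U1 U2 : Set X) : Prop :=
  ∀ R > (0 : ℝ), Bornology.IsBounded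
    {x ∈ U | (∃ y ∈ U \ U1, dist x y ≤ R) ∧ (∃ y ∈ U \ U2, dist x y ≤ R)}

theorem exists_mem_sdiff_dist_le_of_closure {X : Type*} [PseudoMetricSpace X]
    {U V : Set X} {x x' : X} {R δ : ℝ} (hδ : 0 < δ) (hxx' : dist x' x ≤ δ)
    (h : ∃ y ∈ closure U \ closure V, dist x y ≤ R) :
    ∃ y ∈ U \ V, dist x' y ≤ R + 2 * δ := by
  obtain ⟨y, hy, hxy⟩ := h
  obtain ⟨y', hy', hyy'⟩ := Metric.mem_closure_iff.mp (closure_sdiff hy) δ hδ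
  refine ⟨y', hy', ?_⟩
  calc dist x' y' ≤ dist x' x + dist x y + dist y y' := dist_triangle4 _ _ _ _
    _ ≤ R + 2 * δ := by linarith

theorem coarse_cover_closure_general
    (X : Type*) [MetricSpace X] (U U1 U2 : Set X)
    (hcover : CoarselyCovers U U1 U2) :
    CoarselyCovers (closure U) (closure U1) (closure U2) := by
  intro R hR
  refine ((hcover (R + 2 * 1) (by linarith)).cthickening (δ := 1)).subset ?_
  rintro x ⟨hxU, h1, h2⟩
  obtain ⟨x', hx'U, hxx'⟩ := Metric.mem_closure_iff.mp hxU 1 one_pos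
  have hx'x : dist x' x ≤ 1 := by rw [dist_comm]; exact hxx'.le
  exact Metric.mem_cthickening_of_dist_le x x' 1 _
    ⟨hx'U, exists_mem_sdiff_dist_le_of_closure one_pos hx'x h1,
      exists_mem_sdiff_dist_le_of_closure one_pos hx'x h2⟩ hxx'.le

/-- Let `X` be a metric space and `U1, U2 ⊆ U ⊆ X` subsets. If `U1` and `U2`
coarsely cover `U`, then their closures `Ū1` and `Ū2` coarsely cover the closure `Ū`. -/
theorem coarse_cover_closure
    (X : Type*) [MetricSpace X] (U U1 U2 : Set X)
    (hU1 : U1 ⊆ U) (hU2 : U2 ⊆ U)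
    (hcover : CoarselyCovers U U1 U2) :
    CoarselyCovers (closure U) (closure U1) (closure U2) :=
  coarse_cover_closure_general X U U1 U2 hcover
end
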